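/- Let S = ℤ_(3)[e₁, e₂] ⊂ R = ℤ_(3)[λ₁,λ₂] where e₁ = λ₁+λ₂ and e₂ = λ₁λ₂. Then R ⊗_S R ≅ ℤ_(3)[λ₁, λ₂, a]/(a² + λ₁a − λ₂a), where a = (λ₁ ⊗ 1) − (1 ⊗ λ₁) corresponds to η_R(λ₁) − λ₁ (here the isomorphism identifies 1 ⊗ λ₁ with a + λ₁). -/

import Mathlib

/-!
The two units `R → Q`, `η_L : λᵢ ↦ λᵢ` and `η_R : λ₁ ↦ a + λ₁, λ₂ ↦ λ₂ - a`, agree on `e₁`, and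
on `e₂` exactly modulo `a² + λ₁a - λ₂a = λ₁λ₂ - (a + λ₁)(λ₂ - a)`, so they induce
`R ⊗_S R → Q`. Conversely `a ↦ 1 ⊗ λ₁ - λ₁ ⊗ 1` respects the relation, because
`a (a + λ₁ - λ₂) ↦ (1 ⊗ λ₁ - λ₁ ⊗ 1)(1 ⊗ λ₁ - λ₂ ⊗ 1) = 1 ⊗ (λ₁² - e₁λ₁ + e₂) = 0`.
The two maps are mutually inverse on generators, where `1 ⊗ λ₂ = e₁ ⊗ 1 - 1 ⊗ λ₁`.
-/

open MvPolynomial TensorProduct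

instance : (Ideal.span {(3 : ℤ)}).IsPrime :=
  (Ideal.span_singleton_prime (by norm_num)).mpr Int.prime_three

/-- `ℤ` localized at the prime `3`. -/
noncomputable abbrev Zloc3 : Type :=
  Localization.AtPrime (R := ℤ) (Ideal.span {(3 : ℤ)})

/-- `R = ℤ₍₃₎[λ₁,λ₂]`, with `λ₁ = X 0`, `λ₂ = X 1`. -/
noncomputable abbrev Rring : Type := MvPolynomial (Fin 2) Zloc3

/-- `S = ℤ₍₃₎[e₁, e₂]` with `e₁ = λ₁+λ₂`, `e₂ = λ₁λ₂`. -/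
noncomputable abbrev Ssub : Subalgebra Zloc3 Rring :=
  Algebra.adjoin Zloc3 {(X 0 + X 1 : Rring), X 0 * X 1}

/-- The target ring `ℤ₍₃₎[λ₁,λ₂,a]/(a² + λ₁a − λ₂a)`, with
`λ₁ = X 0`, `λ₂ = X 1`, `a = X 2`. -/
noncomputable abbrev Qring : Type :=
  MvPolynomial (Fin 3) Zloc3 ⧸
    (Ideal.span {(X 2 : MvPolynomial (Fin 3) Zloc3) ^ 2 + X 0 * X 2 - X 1 * X 2})

noncomputable abbrev qmk : MvPolynomial (Fin 3) Zloc3 →+* Qring :=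
  Ideal.Quotient.mk _

namespace Algebra.TensorProduct

variable {k A C : Type*} [CommSemiring k] [CommSemiring A] [Algebra k A] [CommSemiring C]
  [Algebra k C]

theorem tmul_one_eq_one_tmul_of_mem {S : Subalgebra k A} {s : A} (hs : s ∈ S) :
    s ⊗ₜ[S] (1 : A) = 1 ⊗ₜ[S] s :=
  tmul_one_eq_one_tmul (⟨s, hs⟩ : S)

noncomputable def liftOfEqOn (S : Subalgebra k A) (f g : A →ₐ[k] C) (hfg : Set.EqOn f g S) :
    A ⊗[S] A →ₐ[k] C :=
  letI : Algebra S C := (f.toRingHom.comp S.val.toRingHom).toAlgebra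
  haveI : IsScalarTower k S C := .of_algebraMap_eq fun c => (f.commutes c).symm
  let f' : A →ₐ[S] C := { f with commutes' := fun _ => rfl }
  let g' : A →ₐ[S] C := { g with commutes' := fun s => (hfg s.2).symm }
  (lift f' g' fun _ _ => .all _ _).restrictScalars k

@[simp]
theorem liftOfEqOn_tmul (S : Subalgebra k A) (f g : A →ₐ[k] C) (hfg : Set.EqOn f g S)
    (a b : A) : liftOfEqOn S f g hfg (a ⊗ₜ b) = f a * g b :=
  rfl

theorem algHom_ext_of_subalgebra {S : Subalgebra k A} {g h : A ⊗[S] A →ₐ[k] C}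
    (hl : g.comp includeLeft = h.comp includeLeft)
    (hr : g.comp (includeRight.restrictScalars k) = h.comp (includeRight.restrictScalars k)) :
    g = h :=
  AlgHom.coe_ringHom_injective <| ringHom_ext (congrArg AlgHom.toRingHom hl)
    (congrArg AlgHom.toRingHom hr)

end Algebra.TensorProduct

namespace SymmetricTensorSquare

open Algebra.TensorProduct

variable (k : Type*) [CommRing k]

noncomputable abbrev symmetricSubalgebra : Subalgebra k (MvPolynomial (Fin 2) k) :=
  Algebra.adjoin k {X 0 + X 1, X 0 * X 1}

noncomputable abbrev TensorSquare : Type _ :=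
  MvPolynomial (Fin 2) k ⊗[symmetricSubalgebra k] MvPolynomial (Fin 2) k

noncomputable abbrev relation : MvPolynomial (Fin 3) k := X 2 ^ 2 + X 0 * X 2 - X 1 * X 2

noncomputable abbrev Model : Type _ := MvPolynomial (Fin 3) k ⧸ Ideal.span {relation k}

noncomputable abbrev mk : MvPolynomial (Fin 3) k →+* Model k := Ideal.Quotient.mk _

theorem mk_relation :
    mk k (X 2) ^ 2 + mk k (X 0) * mk k (X 2) - mk k (X 1) * mk k (X 2) = 0 := by
  rw [← map_pow, ← map_mul, ← map_mul, ← map_add, ← map_sub]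
  exact Ideal.Quotient.eq_zero_iff_mem.2 (Ideal.mem_span_singleton_self _)

theorem X_add_X_mem : (X 0 + X 1 : MvPolynomial (Fin 2) k) ∈ symmetricSubalgebra k :=
  Algebra.subset_adjoin (by simp)

theorem X_mul_X_mem : (X 0 * X 1 : MvPolynomial (Fin 2) k) ∈ symmetricSubalgebra k :=
  Algebra.subset_adjoin (by simp)

noncomputable def leftUnit : MvPolynomial (Fin 2) k →ₐ[k] Model k :=
  aeval ![mk k (X 0), mk k (X 1)]

noncomputable def rightUnit : MvPolynomial (Fin 2) k →ₐ[k] Model k :=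
  aeval ![mk k (X 2 + X 0), mk k (X 1 - X 2)]

theorem symmetricSubalgebra_le_equalizer :
    symmetricSubalgebra k ≤ AlgHom.equalizer (leftUnit k) (rightUnit k) := by
  refine Algebra.adjoin_le ?_
  rintro _ (rfl | rfl) <;>
    simp only [leftUnit, rightUnit, map_add, map_sub, map_mul, AlgHom.coe_equalizer,
      Set.mem_ofPred_eq, aeval_X, Matrix.cons_val_zero, Matrix.cons_val_one, Matrix.cons_val_fin_one]
  · ring
  · linear_combination mk_relation k

noncomputable def toModel : TensorSquare k →ₐ[k] Model k :=
  liftOfEqOn _ (leftUnit k) (rightUnit k) fun _ hs => symmetricSubalgebra_le_equalizer k hs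

theorem one_tmul_X_one : (1 ⊗ₜ X 1 : TensorSquare k) = X 0 ⊗ₜ 1 + X 1 ⊗ₜ 1 - 1 ⊗ₜ X 0 := by
  rw [← add_tmul, tmul_one_eq_one_tmul_of_mem (X_add_X_mem k), ← tmul_sub, add_sub_cancel_left]

noncomputable def ofModelPoly : MvPolynomial (Fin 3) k →ₐ[k] TensorSquare k :=
  aeval ![X 0 ⊗ₜ 1, X 1 ⊗ₜ 1, 1 ⊗ₜ X 0 - X 0 ⊗ₜ 1]

theorem ofModelPoly_relation : ofModelPoly k (relation k) = 0 := by
  set l₁ : TensorSquare k := X 0 ⊗ₜ 1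
  set l₂ : TensorSquare k := X 1 ⊗ₜ 1
  set r₁ : TensorSquare k := 1 ⊗ₜ X 0
  have he₁ : l₁ + l₂ = 1 ⊗ₜ (X 0 + X 1) := by
    rw [← add_tmul, tmul_one_eq_one_tmul_of_mem (X_add_X_mem k)]
  have he₂ : l₁ * l₂ = 1 ⊗ₜ (X 0 * X 1) := by
    rw [tmul_mul_tmul, mul_one, tmul_one_eq_one_tmul_of_mem (X_mul_X_mem k)]
  calc ofModelPoly k (relation k) = r₁ * r₁ - (l₁ + l₂) * r₁ + l₁ * l₂ := by
        simp only [ofModelPoly, relation, map_add, map_sub, map_mul, map_pow, aeval_X,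
          Matrix.cons_val, Matrix.cons_val_zero, Matrix.cons_val_one]
        ring
    _ = 1 ⊗ₜ (X 0 * X 0 - (X 0 + X 1) * X 0 + X 0 * X 1) := by
        rw [he₁, he₂, tmul_mul_tmul, tmul_mul_tmul, mul_one, ← tmul_sub, ← tmul_add]
    _ = 0 := by
        rw [show (X 0 * X 0 - (X 0 + X 1) * X 0 + X 0 * X 1 : MvPolynomial (Fin 2) k) = 0 by ring,
          tmul_zero]

noncomputable def ofModel : Model k →ₐ[k] TensorSquare k :=
  Ideal.Quotient.liftₐ _ (ofModelPoly k) fun _ ha => by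
    obtain ⟨c, rfl⟩ := Ideal.mem_span_singleton'.1 ha
    rw [map_mul, ofModelPoly_relation, mul_zero]

@[simp]
theorem ofModel_mk (p : MvPolynomial (Fin 3) k) : ofModel k (mk k p) = ofModelPoly k p := rfl

@[simp]
theorem toModel_tmul (a b : MvPolynomial (Fin 2) k) :
    toModel k (a ⊗ₜ b) = leftUnit k a * rightUnit k b := rfl

theorem toModel_comp_ofModel : (toModel k).comp (ofModel k) = AlgHom.id k (Model k) := by
  refine Ideal.Quotient.algHom_ext _ (MvPolynomial.algHom_ext fun i => ?_)
  fin_cases i <;> simp [ofModelPoly, leftUnit, rightUnit]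

theorem ofModel_comp_toModel : (ofModel k).comp (toModel k) = AlgHom.id k (TensorSquare k) := by
  refine algHom_ext_of_subalgebra (MvPolynomial.algHom_ext fun i => ?_)
    (MvPolynomial.algHom_ext fun i => ?_)
  · fin_cases i <;> simp [ofModelPoly, leftUnit, rightUnit]
  · fin_cases i
    · simp [ofModelPoly, leftUnit, rightUnit]
    · simp only [Fin.mk_one, Fin.isValue, AlgHom.coe_comp, AlgHom.coe_restrictScalars',
        Function.comp_apply, includeRight_apply, toModel_tmul, map_one, rightUnit, map_add, map_sub,
        aeval_X, Matrix.cons_val_one, Matrix.cons_val_fin_one, one_mul, ofModel_mk, ofModelPoly,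
        Matrix.cons_val_zero, Matrix.cons_val, AlgHom.id_comp]
      rw [one_tmul_X_one]
      abel

noncomputable def tensorSquareEquiv : TensorSquare k ≃ₐ[k] Model k :=
  AlgEquiv.ofAlgHom (toModel k) (ofModel k) (toModel_comp_ofModel k) (ofModel_comp_toModel k)

end SymmetricTensorSquare

/-- `R ⊗_S R ≅ ℤ₍₃₎[λ₁,λ₂,a]/(a² + λ₁a − λ₂a)`, the isomorphism sending
`λ₁ ⊗ 1 ↦ λ₁`, `λ₂ ⊗ 1 ↦ λ₂` and the right unit `1 ⊗ λ₁ ↦ a + λ₁`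
(so `a` corresponds to `η_R(λ₁) − λ₁ = 1 ⊗ λ₁ − λ₁ ⊗ 1`). -/
theorem stmt6 :
    ∃ e : (Rring ⊗[Ssub] Rring) ≃+* Qring,
      e ((X 0 : Rring) ⊗ₜ[Ssub] (1 : Rring)) = qmk (X 0) ∧
      e ((X 1 : Rring) ⊗ₜ[Ssub] (1 : Rring)) = qmk (X 1) ∧
      e ((1 : Rring) ⊗ₜ[Ssub] (X 0 : Rring)) = qmk (X 2 + X 0) :=
  ⟨(SymmetricTensorSquare.tensorSquareEquiv Zloc3).toRingEquiv, by
    open SymmetricTensorSquare in simp [tensorSquareEquiv, leftUnit, rightUnit]⟩
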